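/- Let b > 1 and let s, s' be reals with 0 < s ≤ s'. Define F(s,s') = 2·b^{⌊log_b s⌋+1}/(b−1) + s' if ⌊log_b s⌋ = ⌊log_b s'⌋, and F(s,s') = b^{⌊log_b s⌋+1}·(2/(b−1) + 1) + s otherwise. Then s' ↦ F(s,s') is monotone non-decreasing on [s,∞) and s ↦ F(s,s') is monotone non-decreasing on (0, s']. -/

import Mathlib

open Real

/-- The function
`F(s,s') = 2·b^{⌊log_b s⌋+1}/(b−1) + s'` if `⌊log_b s⌋ = ⌊log_b s'⌋`, and
`F(s,s') = b^{⌊log_b s⌋+1}·(2/(b−1) + 1) + s` otherwise. -/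
noncomputable def F17 (b s s' : ℝ) : ℝ :=
  if ⌊Real.logb b s⌋ = ⌊Real.logb b s'⌋ then
    2 * b ^ (⌊Real.logb b s⌋ + 1) / (b - 1) + s'
  else
    b ^ (⌊Real.logb b s⌋ + 1) * (2 / (b - 1) + 1) + s

/-!
Write `k(x) = ⌊log_b x⌋`, which is monotone on `(0, ∞)` and satisfies `x < b^(k(x)+1)`.
For fixed `s`, on the block `k(s') = k(s)` we have `F = C + s'` with `C = 2b^(k(s)+1)/(b-1)`
and `s' < b^(k(s)+1)`, so `F` stays below the constant value `C + b^(k(s)+1) + s` it takes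
beyond that block. For fixed `s'`, `F` is constant on the block `k(s) = k(s')`, and for
`k(s) < k(s')` the second branch is dominated by the first because `b^(k(s)+1) ≤ b^k(s')`
and `2/(b-1) + 1 ≤ b · 2/(b-1)`.
-/

section

variable {b : ℝ}

lemma floor_logb_le_floor_logb (hb : 1 < b) {x y : ℝ} (hx : 0 < x) (hxy : x ≤ y) :
    ⌊logb b x⌋ ≤ ⌊logb b y⌋ :=
  Int.floor_le_floor (logb_le_logb_of_le hb hx hxy)

lemma lt_zpow_floor_logb_add_one (hb : 1 < b) {x : ℝ} (hx : 0 < x) :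
    x < b ^ (⌊logb b x⌋ + 1) := by
  rw [← rpow_intCast, ← logb_lt_iff_lt_rpow hb hx]
  push_cast
  exact Int.lt_floor_add_one _

lemma zpow_add_one_mul_le_of_lt (hb : 1 < b) {m n : ℤ} (hmn : m < n) :
    b ^ (m + 1) * (2 / (b - 1) + 1) ≤ 2 * b ^ (n + 1) / (b - 1) := by
  have hb1 : 0 < b - 1 := by linarith
  calc b ^ (m + 1) * (2 / (b - 1) + 1)
      ≤ b ^ (m + 1) * (2 / (b - 1) + 2) := by gcongr; norm_num
    _ = 2 * (b ^ (m + 1) * b) / (b - 1) := by field_simp; ring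
    _ = 2 * b ^ (m + 1 + 1) / (b - 1) := by rw [← zpow_add_one₀ (by positivity) (m + 1)]
    _ ≤ 2 * b ^ (n + 1) / (b - 1) := by gcongr; exacts [hb.le, by omega]

lemma monotoneOn_F17_right (hb : 1 < b) {s : ℝ} (hs : 0 < s) :
    MonotoneOn (F17 b s) (Set.Ici s) := by
  intro x (hx : s ≤ x) y (_ : s ≤ y) hxy
  have hx0 : 0 < x := hs.trans_le hx
  have hsx := floor_logb_le_floor_logb hb hs hx
  have hxy' := floor_logb_le_floor_logb hb hx0 hxy
  by_cases hey : ⌊logb b s⌋ = ⌊logb b y⌋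
  · have hex : ⌊logb b s⌋ = ⌊logb b x⌋ := by omega
    rw [F17, F17, if_pos hex, if_pos hey]
    linarith
  by_cases hex : ⌊logb b s⌋ = ⌊logb b x⌋
  · rw [F17, F17, if_pos hex, if_neg hey]
    have hx_lt := lt_zpow_floor_logb_add_one hb hx0
    rw [← hex] at hx_lt
    have hsplit : b ^ (⌊logb b s⌋ + 1) * (2 / (b - 1) + 1)
        = 2 * b ^ (⌊logb b s⌋ + 1) / (b - 1) + b ^ (⌊logb b s⌋ + 1) := by ring
    linarith
  · rw [F17, F17, if_neg hex, if_neg hey]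

lemma monotoneOn_F17_left (hb : 1 < b) {s' : ℝ} :
    MonotoneOn (fun s => F17 b s s') (Set.Ioc 0 s') := by
  intro x ⟨hx0, hxs⟩ y ⟨hy0, hys⟩ hxy
  have hxy' := floor_logb_le_floor_logb hb hx0 hxy
  have hys' := floor_logb_le_floor_logb hb hy0 hys
  by_cases hex : ⌊logb b x⌋ = ⌊logb b s'⌋
  · have hey : ⌊logb b y⌋ = ⌊logb b s'⌋ := by omega
    simp only [F17]
    rw [if_pos hex, if_pos hey, hex, hey]
  by_cases hey : ⌊logb b y⌋ = ⌊logb b s'⌋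
  · simp only [F17]
    rw [if_neg hex, if_pos hey, hey]
    have hbranch := zpow_add_one_mul_le_of_lt hb ((hxy'.trans hys').lt_of_ne hex)
    linarith
  · simp only [F17]
    rw [if_neg hex, if_neg hey]
    have hc : 0 ≤ 2 / (b - 1) + 1 := by
      have hb1 : 0 < b - 1 := by linarith
      positivity
    gcongr
    exact hb.le

end

/-- For `b > 1`: the map `s' ↦ F(s,s')` is monotone non-decreasing on `[s,∞)` for each
`s > 0`, and the map `s ↦ F(s,s')` is monotone non-decreasing on `(0,s']` for each
`s' > 0`. -/
theorem F_monotone (b : ℝ) (hb : 1 < b) :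
    (∀ s : ℝ, 0 < s → MonotoneOn (fun s' => F17 b s s') (Set.Ici s)) ∧
    (∀ s' : ℝ, 0 < s' → MonotoneOn (fun s => F17 b s s') (Set.Ioc 0 s')) :=
  ⟨fun _ hs => monotoneOn_F17_right hb hs, fun _ _ => monotoneOn_F17_left hb⟩
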